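/- arXiv:2001.04714 — 2 statements merged into one kernel-verified Lean document; each statement's English description precedes it below -/
import Mathlib

section
/- Every Archimedean f-algebra is commutative. -/
/-!
Fix `0 ≤ h ≤ c` and `q : ℕ`. In the lattice-ordered group, `c` splits as a sum of "tents"
`v₀ + ⋯ + v_q` (for real numbers `v_k = c * (1 - |q h / c - k|)⁺`) with `∑ k • v_k = q • h`, and tents
two steps apart are disjoint, so their products vanish in an f-algebra. Expanding the products
gives `q • (c h - h c) = ∑ (k - j) • v_j v_k ≤ ∑ v_j v_k = c²`, and the Archimedean property forces
`c h = h c`. Positive elements `a, b` commute by taking `h = a`, `c = a + b`, and arbitrary ones by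
splitting them into positive and negative parts.
-/

section LatticeOrderedGroup

variable {α : Type*} [AddCommGroup α]

theorem sub_succ_nsmul_add (a c : α) (k : ℕ) : a - (k + 1) • c + c = a - k • c := by
  rw [succ_nsmul, sub_add_eq_sub_sub, sub_add_cancel]

variable [Lattice α]

/-- The second difference of `t ↦ (x - t • c)⁺` at `t = 0`; for real numbers and `0 ≤ c` it is
`(c - |x|)⁺`. -/
def tentAt (c x : α) : α := ((x + c)⁺ - x⁺) - (x⁺ - (x - c)⁺)

/-- For real numbers with `0 < c`, `tent a c k = c * (1 - |a / c - k|)⁺`. -/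
def tent (a c : α) (k : ℕ) : α := tentAt c (a - k • c)

theorem tent_eq_sub (a c : α) (k : ℕ) :
    tent a c k = ((a - k • c + c)⁺ - (a - k • c)⁺)
      - ((a - (k + 1) • c + c)⁺ - (a - (k + 1) • c)⁺) := by
  rw [tent, tentAt, sub_succ_nsmul_add, succ_nsmul, sub_add_eq_sub_sub]

variable [IsOrderedAddMonoid α]

theorem posPart_inf_posPart_eq_zero_of_add_nonpos {a b : α} (h : a + b ≤ 0) : a⁺ ⊓ b⁺ = 0 := by
  refine le_antisymm ?_ (le_inf (posPart_nonneg a) (posPart_nonneg b))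
  calc a⁺ ⊓ b⁺ ≤ b⁻ ⊓ b⁺ := inf_le_inf_right _ (posPart_mono (le_neg_iff_add_nonpos_right.2 h))
    _ = 0 := by rw [inf_comm, posPart_inf_negPart_eq_zero]

theorem tentAt_nonneg {c : α} (hc : 0 ≤ c) (x : α) : 0 ≤ tentAt c x := by
  rw [tentAt, sub_nonneg, sub_le_sub_iff]
  have hx : x ≤ (x + c)⁺ + (x - c)⁺ := (le_add_of_nonneg_right hc).trans <|
    (le_posPart _).trans (le_add_of_nonneg_right (posPart_nonneg _))
  rw [posPart_def x, sup_add, add_sup, add_sup, add_zero, zero_add, zero_add]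
  refine sup_le (sup_le ?_ hx) (sup_le hx (add_nonneg (posPart_nonneg _) (posPart_nonneg _)))
  calc x + x = (x + c) + (x - c) := by abel
    _ ≤ _ := add_le_add (le_posPart _) (le_posPart _)

theorem tentAt_neg (c x : α) : tentAt c (-x) = tentAt c x := by
  have h (a : α) : (-a)⁺ = a⁺ - a := by
    rw [posPart_neg, ← sub_sub_cancel a⁺ a⁻, posPart_sub_negPart]
  rw [tentAt, tentAt, show -x + c = -(x - c) by abel, show -x - c = -(x + c) by abel, h, h, h]
  abel

theorem tentAt_le_posPart_add {c : α} (hc : 0 ≤ c) (x : α) : tentAt c x ≤ (x + c)⁺ := by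
  have : (x - c)⁺ ≤ x⁺ + x⁺ :=
    (posPart_mono (sub_le_self x hc)).trans (le_add_of_nonneg_left (posPart_nonneg x))
  calc tentAt c x = (x + c)⁺ - (x⁺ + x⁺ - (x - c)⁺) := by rw [tentAt]; abel
    _ ≤ (x + c)⁺ := sub_le_self _ (sub_nonneg.2 this)

theorem tentAt_le_posPart_sub {c : α} (hc : 0 ≤ c) (x : α) : tentAt c x ≤ (c - x)⁺ := by
  simpa [← tentAt_neg c x, neg_add_eq_sub] using tentAt_le_posPart_add hc (-x)

theorem tentAt_inf_tentAt {c x y : α} (hc : 0 ≤ c) (hxy : c + c ≤ x - y) :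
    tentAt c x ⊓ tentAt c y = 0 := by
  refine le_antisymm ?_ (le_inf (tentAt_nonneg hc x) (tentAt_nonneg hc y))
  calc tentAt c x ⊓ tentAt c y ≤ (c - x)⁺ ⊓ (y + c)⁺ :=
        inf_le_inf (tentAt_le_posPart_sub hc x) (tentAt_le_posPart_add hc y)
    _ = 0 := posPart_inf_posPart_eq_zero_of_add_nonpos <| by
        calc c - x + (y + c) = (c + c) - (x - y) := by abel
          _ ≤ 0 := sub_nonpos.2 hxy

theorem tent_nonneg (a : α) {c : α} (hc : 0 ≤ c) (k : ℕ) : 0 ≤ tent a c k := tentAt_nonneg hc _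

theorem tent_inf_tent (a : α) {c : α} (hc : 0 ≤ c) {j k : ℕ} (hjk : j + 2 ≤ k) :
    tent a c j ⊓ tent a c k = 0 := by
  refine tentAt_inf_tentAt hc ?_
  calc c + c = 2 • c := (two_nsmul c).symm
    _ ≤ (k - j) • c := nsmul_le_nsmul_left hc (by omega)
    _ = a - j • c - (a - k • c) := by rw [sub_nsmul c (by omega : j ≤ k)]; abel

theorem posPart_sub_nsmul_eq_zero {a c : α} (hc : 0 ≤ c) {n k : ℕ} (han : a ≤ n • c)
    (hnk : n ≤ k) : (a - k • c)⁺ = 0 :=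
  posPart_eq_zero.2 <| sub_nonpos.2 <| han.trans (nsmul_le_nsmul_left hc hnk)

theorem sum_range_tent {a c : α} (ha : 0 ≤ a) (hc : 0 ≤ c) {n : ℕ} (han : a ≤ n • c) :
    ∑ k ∈ Finset.range (n + 1), tent a c k = c := by
  rw [Finset.sum_congr rfl fun k _ => tent_eq_sub a c k, Finset.sum_range_sub',
    sub_succ_nsmul_add, posPart_sub_nsmul_eq_zero hc han le_rfl,
    posPart_sub_nsmul_eq_zero hc han n.le_succ, zero_nsmul, sub_zero,
    posPart_eq_self.2 ha, posPart_eq_self.2 (add_nonneg ha hc), sub_self, sub_zero,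
    add_sub_cancel_left]

theorem sum_range_nsmul_tent {a c : α} (ha : 0 ≤ a) (hc : 0 ≤ c) {n : ℕ} (han : a ≤ n • c) :
    ∑ k ∈ Finset.range (n + 1), k • tent a c k = a := by
  set g : ℕ → α := fun k => (a - k • c + c)⁺ - (a - k • c)⁺
  have hg : g (n + 1) = 0 := by
    simp only [g, sub_succ_nsmul_add, posPart_sub_nsmul_eq_zero hc han le_rfl,
      posPart_sub_nsmul_eq_zero hc han n.le_succ, sub_zero]
  have hterm (k : ℕ) : k • tent a c k = (k • g k - (k + 1) • g (k + 1)) + g (k + 1) := by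
    simp only [g, tent_eq_sub, nsmul_sub, succ_nsmul]; abel
  rw [Finset.sum_congr rfl fun k _ => hterm k, Finset.sum_add_distrib, Finset.sum_range_sub',
    hg, smul_zero, zero_nsmul, sub_zero, zero_add]
  simp only [g, sub_succ_nsmul_add]
  rw [Finset.sum_range_sub', posPart_sub_nsmul_eq_zero hc han n.le_succ, zero_nsmul, sub_zero,
    sub_zero, posPart_eq_self.2 ha]

theorem nsmul_posPart_add_nsmul_le {d e : α} (h : ∀ m : ℕ, m • d ≤ e) :
    ∀ n m : ℕ, n • d⁺ + m • d ≤ e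
  | 0, m => by simpa using h m
  | n + 1, m => by
    rw [succ_nsmul, posPart_def, add_sup, add_zero, sup_add, add_assoc, ← succ_nsmul']
    exact sup_le (nsmul_posPart_add_nsmul_le h n (m + 1)) (nsmul_posPart_add_nsmul_le h n m)

theorem nonpos_of_forall_nsmul_le
    (harch : ∀ x y : α, 0 ≤ x → (∀ n : ℕ, n • x ≤ y) → x = 0)
    {d e : α} (h : ∀ n : ℕ, n • d ≤ e) : d ≤ 0 :=
  posPart_eq_zero.1 <| harch _ e (posPart_nonneg d) fun n => by
    simpa using nsmul_posPart_add_nsmul_le h n 0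

end LatticeOrderedGroup

theorem sum_sum_nsmul_le_of_banded {α : Type*} [AddCommMonoid α] [PartialOrder α]
    [IsOrderedAddMonoid α] (s : Finset ℕ) {P : ℕ → ℕ → α} (hP : ∀ j k, 0 ≤ P j k)
    (hband : ∀ j k, j + 2 ≤ k → P j k = 0) :
    ∑ j ∈ s, ∑ k ∈ s, k • P j k ≤ ∑ j ∈ s, ∑ k ∈ s, (j + 1) • P j k :=
  Finset.sum_le_sum fun j _ => Finset.sum_le_sum fun k _ => by
    rcases le_or_gt k (j + 1) with hk | hk
    · exact nsmul_le_nsmul_left (hP j k) hk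
    · simp [hband j k hk]

section OrderedRing

variable {E : Type*} [Ring E]

theorem mul_sub_mul_le_of_banded [PartialOrder E] [IsOrderedAddMonoid E] (s : Finset ℕ)
    {v : ℕ → E} (hpos : ∀ j k, 0 ≤ v j * v k)
    (hband : ∀ j k, j + 2 ≤ k → v j * v k = 0 ∧ v k * v j = 0) {b c : E}
    (hc : ∑ k ∈ s, v k = c) (hb : ∑ k ∈ s, k • v k = b) :
    c * b - b * c ≤ c * c ∧ b * c - c * b ≤ c * c := by
  have hcb : c * b = ∑ j ∈ s, ∑ k ∈ s, k • (v j * v k) := by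
    simp_rw [← hc, ← hb, Finset.sum_mul_sum, mul_smul_comm]
  have hbc : b * c = ∑ j ∈ s, ∑ k ∈ s, j • (v j * v k) := by
    simp_rw [← hc, ← hb, Finset.sum_mul_sum, smul_mul_assoc]
  have hcc : c * c = ∑ j ∈ s, ∑ k ∈ s, v j * v k := by
    rw [← hc, Finset.sum_mul_sum]
  constructor
  · rw [sub_le_iff_le_add', hcb, hbc, hcc]
    calc ∑ j ∈ s, ∑ k ∈ s, k • (v j * v k) ≤ ∑ j ∈ s, ∑ k ∈ s, (j + 1) • (v j * v k) :=
          sum_sum_nsmul_le_of_banded s hpos fun j k hjk => (hband j k hjk).1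
      _ = _ := by simp only [succ_nsmul, Finset.sum_add_distrib]
  · rw [sub_le_iff_le_add', hcb, hbc, hcc]
    calc ∑ j ∈ s, ∑ k ∈ s, j • (v j * v k) = ∑ j ∈ s, ∑ k ∈ s, k • (v k * v j) :=
          Finset.sum_comm
      _ ≤ ∑ j ∈ s, ∑ k ∈ s, (j + 1) • (v k * v j) :=
          sum_sum_nsmul_le_of_banded s (fun j k => hpos k j) fun j k hjk => (hband j k hjk).2
      _ = ∑ j ∈ s, ∑ k ∈ s, (k + 1) • (v j * v k) := Finset.sum_comm
      _ = _ := by simp only [succ_nsmul, Finset.sum_add_distrib]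

variable [Lattice E]

theorem mul_eq_zero_of_inf_eq_zero
    (hf : ∀ x y z : E, x ⊓ y = 0 → 0 ≤ z → (x * z) ⊓ y = 0 ∧ (z * x) ⊓ y = 0)
    {u w : E} (huw : u ⊓ w = 0) : u * w = 0 := by
  have hu : 0 ≤ u := huw ▸ inf_le_left
  have hw : 0 ≤ w := huw ▸ inf_le_right
  have hwuw : w ⊓ (u * w) = 0 := by rw [inf_comm]; exact (hf u w w huw hw).1
  simpa using (hf w (u * w) u hwuw hu).2

variable [IsOrderedAddMonoid E]

theorem commute_of_nonneg_of_le (hmulpos : ∀ x y : E, 0 ≤ x → 0 ≤ y → 0 ≤ x * y)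
    (hf : ∀ x y z : E, x ⊓ y = 0 → 0 ≤ z → (x * z) ⊓ y = 0 ∧ (z * x) ⊓ y = 0)
    (harch : ∀ x y : E, 0 ≤ x → (∀ n : ℕ, n • x ≤ y) → x = 0)
    {h c : E} (h0 : 0 ≤ h) (hhc : h ≤ c) : Commute c h := by
  have hc0 : 0 ≤ c := h0.trans hhc
  have key (q : ℕ) : q • (c * h - h * c) ≤ c * c ∧ q • (h * c - c * h) ≤ c * c := by
    rw [nsmul_sub, nsmul_sub, ← mul_smul_comm, ← smul_mul_assoc]
    refine mul_sub_mul_le_of_banded (Finset.range (q + 1))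
      (fun j k => hmulpos _ _ (tent_nonneg _ hc0 j) (tent_nonneg _ hc0 k)) (fun j k hjk => ?_)
      (sum_range_tent (nsmul_nonneg h0 q) hc0 (nsmul_le_nsmul_right hhc q))
      (sum_range_nsmul_tent (nsmul_nonneg h0 q) hc0 (nsmul_le_nsmul_right hhc q))
    have hdisj := tent_inf_tent (q • h) hc0 hjk
    exact ⟨mul_eq_zero_of_inf_eq_zero hf hdisj,
      mul_eq_zero_of_inf_eq_zero hf (inf_comm (tent (q • h) c j) _ ▸ hdisj)⟩
  exact le_antisymm (sub_nonpos.1 (nonpos_of_forall_nsmul_le harch fun q => (key q).1))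
    (sub_nonpos.1 (nonpos_of_forall_nsmul_le harch fun q => (key q).2))

theorem commute_of_nonneg (hmulpos : ∀ x y : E, 0 ≤ x → 0 ≤ y → 0 ≤ x * y)
    (hf : ∀ x y z : E, x ⊓ y = 0 → 0 ≤ z → (x * z) ⊓ y = 0 ∧ (z * x) ⊓ y = 0)
    (harch : ∀ x y : E, 0 ≤ x → (∀ n : ℕ, n • x ≤ y) → x = 0)
    {a b : E} (ha : 0 ≤ a) (hb : 0 ≤ b) : Commute a b := by
  have := (commute_of_nonneg_of_le hmulpos hf harch ha (le_add_of_nonneg_right hb)).symm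
  simpa using this.sub_right (Commute.refl a)

end OrderedRing

theorem stmt_4_general {E : Type*} [Ring E] [Lattice E]
    [CovariantClass E E (· + ·) (· ≤ ·)]
    -- `E` is a lattice-ordered algebra: the positive cone is closed under multiplication
    (hmulpos : ∀ x y : E, 0 ≤ x → 0 ≤ y → 0 ≤ x * y)
    -- the f-algebra property
    (hf : ∀ x y z : E, x ⊓ y = 0 → 0 ≤ z → (x * z) ⊓ y = 0 ∧ (z * x) ⊓ y = 0)
    -- `E` is Archimedean
    (harch : ∀ x y : E, 0 ≤ x → (∀ n : ℕ, n • x ≤ y) → x = 0) :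
    ∀ x y : E, x * y = y * x := by
  have : IsOrderedAddMonoid E := { add_le_add_left := fun _ _ hab c => add_le_add_left hab c }
  have hcomm {a b : E} (ha : 0 ≤ a) (hb : 0 ≤ b) : Commute a b :=
    commute_of_nonneg hmulpos hf harch ha hb
  intro x y
  rw [← posPart_sub_negPart x, ← posPart_sub_negPart y]
  exact (((hcomm (posPart_nonneg x) (posPart_nonneg y)).sub_right
    (hcomm (posPart_nonneg x) (negPart_nonneg y))).sub_left
    ((hcomm (negPart_nonneg x) (posPart_nonneg y)).sub_right
    (hcomm (negPart_nonneg x) (negPart_nonneg y)))).eq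

/-- Every Archimedean f-algebra is commutative. -/
theorem stmt_4 {E : Type*} [Ring E] [Lattice E]
    [CovariantClass E E (· + ·) (· ≤ ·)] [Module ℝ E]
    -- `E` is a lattice-ordered algebra: the positive cone is closed under multiplication
    (hmulpos : ∀ x y : E, 0 ≤ x → 0 ≤ y → 0 ≤ x * y)
    -- the f-algebra property
    (hf : ∀ x y z : E, x ⊓ y = 0 → 0 ≤ z → (x * z) ⊓ y = 0 ∧ (z * x) ⊓ y = 0)
    -- `E` is Archimedean
    (harch : ∀ x y : E, 0 ≤ x → (∀ n : ℕ, n • x ≤ y) → x = 0) :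
    ∀ x y : E, x * y = y * x :=
  stmt_4_general hmulpos hf harch
end

section
/- Let G be an Archimedean f-algebra with multiplicative unit e, and let q : G → G be a band projection (order projection). Then there exists a positive element t ∈ G₊ with t = t² and q(x) = x·t for all x ∈ G. Consequently, for every v ∈ G, taking q the band projection onto the band generated by v⁺, one has v⁺ = v·t, v⁻·t = 0, and v⁻ = v·(t − e). -/
/-!
Put `t = q e` (in a ring a unit `e` is `1`). Since `0 ≤ q ≤ id` and `q` is idempotent, every
positive element fixed by `q` is disjoint from every positive element killed by `q`; in
particular `t ⊥ e - t`. In an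
f-algebra disjoint positive elements multiply to zero, so for `0 ≤ x` the decomposition
`x = q x + (x - q x)` gives `x * t = q x * e = q x`, and `t * t = t`. The general case follows
from `x = x⁺ - x⁻`, and the statements about `v` from `q v⁺ = v⁺`, `q v⁻ = 0`.
-/

section FAlgebra

def IsMulBandPreserving (A : Type*) [Mul A] [Zero A] [Lattice A] : Prop :=
  ∀ x y z : A, x ⊓ y = 0 → 0 ≤ z → (x * z) ⊓ y = 0 ∧ (z * x) ⊓ y = 0

variable {A : Type*} [Mul A] [Zero A] [Lattice A]

theorem IsMulBandPreserving.mul_eq_zero_of_inf_eq_zero (hf : IsMulBandPreserving A)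
    {a b : A} (ha : 0 ≤ a) (hb : 0 ≤ b) (hab : a ⊓ b = 0) : a * b = 0 := by
  have hab_b : b ⊓ (a * b) = 0 := by rw [inf_comm]; exact (hf a b b hab hb).1
  simpa only [inf_idem] using (hf b (a * b) a hab_b ha).2

end FAlgebra

section OrderProjection

variable {G : Type*} [AddCommGroup G] [Lattice G]

structure AddMonoidHom.IsOrderProjection (q : G →+ G) : Prop where
  idem : ∀ x, q (q x) = q x
  nonneg_le : ∀ x, 0 ≤ x → 0 ≤ q x ∧ q x ≤ x

namespace AddMonoidHom.IsOrderProjection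

variable {q : G →+ G}

theorem map_sub_map_self (hq : q.IsOrderProjection) (x : G) : q (x - q x) = 0 := by
  rw [map_sub, hq.idem, sub_self]

variable [AddLeftMono G]

theorem monotone (hq : q.IsOrderProjection) : Monotone q := fun a b hab => by
  simpa only [map_sub, sub_nonneg] using (hq.nonneg_le (b - a) (sub_nonneg.2 hab)).1

theorem inf_eq_zero (hq : q.IsOrderProjection) {a b : G} (ha : 0 ≤ a) (hb : 0 ≤ b)
    (hqa : q a = 0) (hqb : q b = b) : a ⊓ b = 0 := by
  set d := a ⊓ b
  have hqd_nonpos : q d ≤ 0 := hqa ▸ hq.monotone inf_le_left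
  have hd_le_qd : d ≤ q d := by
    have := (hq.nonneg_le (b - d) (sub_nonneg.2 inf_le_right)).2
    rwa [map_sub, hqb, sub_le_sub_iff_left] at this
  exact le_antisymm (hd_le_qd.trans hqd_nonpos) (le_inf ha hb)

end AddMonoidHom.IsOrderProjection

end OrderProjection

section UnitalFAlgebra

variable {A : Type*} [Ring A] [Lattice A] [AddLeftMono A] {q : A →+ A}

namespace AddMonoidHom.IsOrderProjection

theorem mul_map_one_of_map_eq_self (hq : q.IsOrderProjection)
    (hf : IsMulBandPreserving A) (h1 : (0 : A) ≤ 1)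
    {a : A} (ha : 0 ≤ a) (hqa : q a = a) : a * q 1 = a := by
  have hq1 := hq.nonneg_le 1 h1
  have ha_compl : a * (1 - q 1) = 0 :=
    hf.mul_eq_zero_of_inf_eq_zero ha (sub_nonneg.2 hq1.2)
      (inf_comm a _ ▸ hq.inf_eq_zero (sub_nonneg.2 hq1.2) ha (hq.map_sub_map_self 1) hqa)
  rwa [mul_sub, mul_one, sub_eq_zero, eq_comm] at ha_compl

theorem mul_map_one_of_map_eq_zero (hq : q.IsOrderProjection)
    (hf : IsMulBandPreserving A) (h1 : (0 : A) ≤ 1)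
    {a : A} (ha : 0 ≤ a) (hqa : q a = 0) : a * q 1 = 0 :=
  hf.mul_eq_zero_of_inf_eq_zero ha (hq.nonneg_le 1 h1).1
    (hq.inf_eq_zero ha (hq.nonneg_le 1 h1).1 hqa (hq.idem 1))

theorem map_one_mul_self (hq : q.IsOrderProjection)
    (hf : IsMulBandPreserving A) (h1 : (0 : A) ≤ 1) : q 1 * q 1 = q 1 :=
  hq.mul_map_one_of_map_eq_self hf h1 (hq.nonneg_le 1 h1).1 (hq.idem 1)

theorem map_eq_mul_map_one_of_nonneg (hq : q.IsOrderProjection)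
    (hf : IsMulBandPreserving A) (h1 : (0 : A) ≤ 1) {x : A} (hx : 0 ≤ x) : q x = x * q 1 := by
  have hqx := hq.nonneg_le x hx
  calc q x = q x * q 1 + (x - q x) * q 1 := by
        rw [hq.mul_map_one_of_map_eq_self hf h1 hqx.1 (hq.idem x),
          hq.mul_map_one_of_map_eq_zero hf h1 (sub_nonneg.2 hqx.2) (hq.map_sub_map_self x),
          add_zero]
    _ = x * q 1 := by rw [← add_mul, add_sub_cancel]

theorem map_eq_mul_map_one (hq : q.IsOrderProjection)
    (hf : IsMulBandPreserving A) (h1 : (0 : A) ≤ 1) (x : A) : q x = x * q 1 := by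
  rw [← posPart_sub_negPart x, map_sub, sub_mul,
    hq.map_eq_mul_map_one_of_nonneg hf h1 (posPart_nonneg x),
    hq.map_eq_mul_map_one_of_nonneg hf h1 (negPart_nonneg x)]

theorem posPart_eq_mul_map_one (hq : q.IsOrderProjection)
    (hf : IsMulBandPreserving A) (h1 : (0 : A) ≤ 1)
    {v : A} (hqp : q v⁺ = v⁺) (hqn : q v⁻ = 0) : v⁺ = v * q 1 := by
  rw [← hq.map_eq_mul_map_one hf h1, ← posPart_sub_negPart v, map_sub, hqp, hqn, sub_zero,
    posPart_sub_negPart]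

theorem negPart_eq_mul_map_one_sub_one (hq : q.IsOrderProjection)
    (hf : IsMulBandPreserving A) (h1 : (0 : A) ≤ 1)
    {v : A} (hqp : q v⁺ = v⁺) (hqn : q v⁻ = 0) : v⁻ = v * (q 1 - 1) := by
  rw [mul_sub, mul_one, ← hq.posPart_eq_mul_map_one hf h1 hqp hqn,
    eq_sub_iff_add_eq, add_comm, ← eq_sub_iff_add_eq, posPart_sub_negPart]

end AddMonoidHom.IsOrderProjection

end UnitalFAlgebra

theorem stmt_10_general {G : Type*} [Ring G] [Lattice G]
    [CovariantClass G G (· + ·) (· ≤ ·)] [Module ℝ G]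
    -- the f-algebra property
    (hf : ∀ x y z : G, x ⊓ y = 0 → 0 ≤ z → (x * z) ⊓ y = 0 ∧ (z * x) ⊓ y = 0)
    -- `e` is a positive multiplicative unit of `G`
    (e : G) (he : 0 ≤ e) (heu : ∀ x : G, e * x = x ∧ x * e = x) :
    -- every band projection is multiplication by a positive idempotent
    (∀ q : G → G,
      (∀ x y : G, q (x + y) = q x + q y) →
      (∀ (c : ℝ) (x : G), q (c • x) = c • q x) →
      (∀ x : G, q (q x) = q x) →
      (∀ x : G, 0 ≤ x → 0 ≤ q x ∧ q x ≤ x) →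
      ∃ t : G, 0 ≤ t ∧ t * t = t ∧ ∀ x : G, q x = x * t) ∧
    -- consequence for the band projection onto the band generated by `v⁺ = v ⊔ 0`
    (∀ v : G, ∀ q : G → G,
      (∀ x y : G, q (x + y) = q x + q y) →
      (∀ (c : ℝ) (x : G), q (c • x) = c • q x) →
      (∀ x : G, q (q x) = q x) →
      (∀ x : G, 0 ≤ x → 0 ≤ q x ∧ q x ≤ x) →
      -- `q` maps into the band generated by `v⁺` and fixes it
      (∀ x : G, ∀ y : G, |y| ⊓ (v ⊔ 0) = 0 → |q x| ⊓ |y| = 0) →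
      (∀ x : G, (∀ y : G, |y| ⊓ (v ⊔ 0) = 0 → |x| ⊓ |y| = 0) → q x = x) →
      ∃ t : G, 0 ≤ t ∧ t * t = t ∧ (∀ x : G, q x = x * t) ∧
        v ⊔ 0 = v * t ∧ ((-v) ⊔ 0) * t = 0 ∧ (-v) ⊔ 0 = v * (t - e)) := by
  obtain rfl : e = 1 := by simpa using (heu 1).1
  refine ⟨fun q hadd _ hidem hpos => ?_, fun v q hadd _ hidem hpos hband hfix => ?_⟩
  · have hq : (AddMonoidHom.mk' q hadd).IsOrderProjection := ⟨hidem, hpos⟩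
    exact ⟨q 1, (hpos 1 he).1, hq.map_one_mul_self hf he, hq.map_eq_mul_map_one hf he⟩
  · have hq : (AddMonoidHom.mk' q hadd).IsOrderProjection := ⟨hidem, hpos⟩
    have hqp : q v⁺ = v⁺ :=
      hfix _ fun y hy => by rwa [abs_of_nonneg (posPart_nonneg v), inf_comm]
    have hqn : q v⁻ = 0 := by
      have hv : |v⁻| ⊓ (v ⊔ 0) = 0 := by
        rw [abs_of_nonneg (negPart_nonneg v), inf_comm]
        exact posPart_inf_negPart_eq_zero v
      have hdisj := hband v⁻ v⁻ hv
      rw [abs_of_nonneg (negPart_nonneg v), abs_of_nonneg (hpos _ (negPart_nonneg v)).1,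
        inf_eq_left.2 (hpos _ (negPart_nonneg v)).2] at hdisj
      exact hdisj
    exact ⟨q 1, (hpos 1 he).1, hq.map_one_mul_self hf he, hq.map_eq_mul_map_one hf he,
      hq.posPart_eq_mul_map_one hf he hqp hqn,
      (hq.map_eq_mul_map_one hf he v⁻).symm.trans hqn,
      hq.negPart_eq_mul_map_one_sub_one hf he hqp hqn⟩

/-- Let `G` be an Archimedean f-algebra with multiplicative unit `e`, and `q : G → G` a
band projection (a linear idempotent with `0 ≤ q x ≤ x` for `x ≥ 0`).  Then there is a
positive idempotent `t ∈ G₊` with `q x = x * t` for all `x`.  Consequently, for every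
`v ∈ G`, taking `q` the band projection onto the band generated by `v⁺` (formalized as the
double disjoint complement of `v⁺`), one has `v⁺ = v * t`, `v⁻ * t = 0` and
`v⁻ = v * (t - e)`. -/
theorem stmt_10 {G : Type*} [Ring G] [Lattice G]
    [CovariantClass G G (· + ·) (· ≤ ·)] [Module ℝ G]
    -- `G` is a lattice-ordered algebra
    (hmulpos : ∀ x y : G, 0 ≤ x → 0 ≤ y → 0 ≤ x * y)
    -- the f-algebra property
    (hf : ∀ x y z : G, x ⊓ y = 0 → 0 ≤ z → (x * z) ⊓ y = 0 ∧ (z * x) ⊓ y = 0)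
    -- `G` is Archimedean
    (harch : ∀ x y : G, 0 ≤ x → (∀ n : ℕ, n • x ≤ y) → x = 0)
    -- `e` is a positive multiplicative unit of `G`
    (e : G) (he : 0 ≤ e) (heu : ∀ x : G, e * x = x ∧ x * e = x) :
    -- every band projection is multiplication by a positive idempotent
    (∀ q : G → G,
      (∀ x y : G, q (x + y) = q x + q y) →
      (∀ (c : ℝ) (x : G), q (c • x) = c • q x) →
      (∀ x : G, q (q x) = q x) →
      (∀ x : G, 0 ≤ x → 0 ≤ q x ∧ q x ≤ x) →
      ∃ t : G, 0 ≤ t ∧ t * t = t ∧ ∀ x : G, q x = x * t) ∧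
    -- consequence for the band projection onto the band generated by `v⁺ = v ⊔ 0`
    (∀ v : G, ∀ q : G → G,
      (∀ x y : G, q (x + y) = q x + q y) →
      (∀ (c : ℝ) (x : G), q (c • x) = c • q x) →
      (∀ x : G, q (q x) = q x) →
      (∀ x : G, 0 ≤ x → 0 ≤ q x ∧ q x ≤ x) →
      -- `q` maps into the band generated by `v⁺` and fixes it
      (∀ x : G, ∀ y : G, |y| ⊓ (v ⊔ 0) = 0 → |q x| ⊓ |y| = 0) →
      (∀ x : G, (∀ y : G, |y| ⊓ (v ⊔ 0) = 0 → |x| ⊓ |y| = 0) → q x = x) →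
      ∃ t : G, 0 ≤ t ∧ t * t = t ∧ (∀ x : G, q x = x * t) ∧
        v ⊔ 0 = v * t ∧ ((-v) ⊔ 0) * t = 0 ∧ (-v) ⊔ 0 = v * (t - e)) :=
  stmt_10_general hf e he heu
end
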